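/- arXiv:2005.13533 — 2 statements merged into one kernel-verified Lean document; each statement's English description precedes it below -/
import Mathlib

section
/- Let d ≥ 1 and ε₁, ε₂ ∈ (0,1). Let F, T ∈ Matrix d d ℂ be Hermitian with operator norm ‖T‖ ≤ 1. Assume: every eigenvalue λ of F satisfies λ ∈ {−1} ∪ [−1+ε₁, 1−ε₁] ∪ {1}; the eigenspaces ker(F − 1) and ker(F + 1) are one-dimensional, spanned by unit vectors f₊ and f₋ respectively; and ‖T·f₊‖ ≤ 1 − ε₂. Then for every a ∈ ℂ^d with ⟪f₋, a⟫ = 0 one has ‖T·(F·a)‖ ≤ (1 − ε₁·ε₂²/8)·‖a‖. -/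
/-!
Write `a = α f₊ + b` with `b ⊥ f₊`. As `a ⊥ f₋` and `f₊ ⊥ f₋`, also `b ⊥ f₋`, so `b` lies in the
span of the eigenvectors of `F` with eigenvalues in `[-1 + ε₁, 1 - ε₁]` and `‖F b‖ ≤ (1 - ε₁) ‖b‖`;
moreover `F a = α f₊ + F b` is again an orthogonal decomposition. If `‖b‖ ≥ ε₂ ‖a‖ / 2`, then
`‖F a‖² ≤ ‖a‖² - ε₁ ‖b‖² ≤ (1 - ε₁ ε₂² / 8)² ‖a‖²` and `‖T‖ ≤ 1` finishes. Otherwise `a` is almost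
parallel to `f₊`, and `‖T F a‖ ≤ (1 - ε₂) |α| + ‖b‖ ≤ (1 - ε₂ / 2) ‖a‖`.
-/

open Matrix

/-- The Euclidean norm of a vector in `ℂ^d`. -/
noncomputable def evnorm {d : ℕ} (v : Fin d → ℂ) : ℝ :=
  Real.sqrt (∑ i, ‖v i‖ ^ 2)

/-- The operator norm of a matrix induced by the Euclidean norm on `ℂ^d`. -/
noncomputable def matOpNorm {d : ℕ} (A : Matrix (Fin d) (Fin d) ℂ) : ℝ :=
  sSup {r : ℝ | ∃ v : Fin d → ℂ, evnorm v ≤ 1 ∧ r = evnorm (A.mulVec v)}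

open WithLp
open scoped InnerProductSpace

theorem le_of_contraction_bounds {ε₁ ε₂ A B X Y Z : ℝ} (hε₁ : ε₁ ∈ Set.Icc (0 : ℝ) 1)
    (hε₂ : ε₂ ∈ Set.Icc (0 : ℝ) 1) (hX : 0 ≤ X) (hXAB : X ^ 2 = A ^ 2 + B ^ 2)
    (hY : Y ^ 2 ≤ A ^ 2 + (1 - ε₁) ^ 2 * B ^ 2) (hZY : Z ≤ Y) (hZ : Z ≤ (1 - ε₂) * A + B) :
    Z ≤ (1 - ε₁ * ε₂ ^ 2 / 8) * X := by
  obtain ⟨hε₁0, hε₁1⟩ := hε₁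
  obtain ⟨hε₂0, hε₂1⟩ := hε₂
  have hprod : ε₁ * ε₂ ^ 2 ≤ 1 := by nlinarith
  rcases le_or_gt (ε₂ / 2 * X) B with hB | hB
  · refine hZY.trans (le_of_sq_le_sq ?_ (by nlinarith))
    have hYB : Y ^ 2 ≤ X ^ 2 - ε₁ * B ^ 2 := by
      nlinarith [mul_nonneg (mul_nonneg hε₁0 (sub_nonneg.mpr hε₁1)) (sq_nonneg B)]
    have hBX : ε₁ * (ε₂ / 2 * X) ^ 2 ≤ ε₁ * B ^ 2 :=
      mul_le_mul_of_nonneg_left (pow_le_pow_left₀ (by positivity) hB 2) hε₁0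
    nlinarith [sq_nonneg (ε₁ * ε₂ ^ 2 / 8 * X)]
  · have hAX : A ≤ X := le_of_sq_le_sq (by nlinarith) hX
    nlinarith [mul_le_mul_of_nonneg_left hAX (by linarith : 0 ≤ 1 - ε₂),
      mul_le_mul_of_nonneg_right (by nlinarith : ε₁ * ε₂ ^ 2 / 8 ≤ ε₂ / 2) hX]

section InnerProductSpace

variable {𝕜 E : Type*} [RCLike 𝕜] [NormedAddCommGroup E] [InnerProductSpace 𝕜 E]

theorem OrthonormalBasis.norm_le_of_norm_inner_le {ι : Type*} [Fintype ι]
    (b : OrthonormalBasis ι 𝕜 E) {c : ℝ} (hc : 0 ≤ c) {x y : E}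
    (h : ∀ i, ‖⟪b i, y⟫_𝕜‖ ≤ c * ‖⟪b i, x⟫_𝕜‖) : ‖y‖ ≤ c * ‖x‖ := by
  refine le_of_sq_le_sq ?_ (by positivity)
  rw [← b.sum_sq_norm_inner_right, mul_pow, ← b.sum_sq_norm_inner_right, Finset.mul_sum]
  gcongr with i
  rw [← mul_pow]
  exact pow_le_pow_left₀ (norm_nonneg _) (h i) 2

theorem LinearMap.IsSymmetric.norm_apply_le_of_inner_eigenvector_eq_zero
    [FiniteDimensional 𝕜 E] {F : E →ₗ[𝕜] E} (hF : F.IsSymmetric) {c : ℝ} (hc : 0 ≤ c) {x : E}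
    (hx : ∀ (μ : ℝ) (v : E), v ≠ 0 → F v = (μ : 𝕜) • v → c < |μ| → ⟪v, x⟫_𝕜 = 0) :
    ‖F x‖ ≤ c * ‖x‖ := by
  set b := hF.eigenvectorBasis rfl
  refine b.norm_le_of_norm_inner_le hc fun i => ?_
  rw [← b.repr_apply_apply, ← b.repr_apply_apply, hF.eigenvectorBasis_apply_self_apply,
    norm_mul, RCLike.norm_ofReal]
  by_cases hμ : |hF.eigenvalues rfl i| ≤ c
  · gcongr
  · rw [b.repr_apply_apply, hx _ _ (b.orthonormal.ne_zero i) (hF.apply_eigenvectorBasis rfl i)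
      (not_le.mp hμ)]
    simp

theorem LinearMap.IsSymmetric.inner_eq_zero_of_apply_eq_self_of_apply_eq_neg
    {F : E →ₗ[𝕜] E} (hF : F.IsSymmetric) {u w : E} (hu : F u = u) (hw : F w = -w) :
    ⟪w, u⟫_𝕜 = 0 := by
  have h := hF w u
  rw [hu, hw, inner_neg_left] at h
  exact self_eq_neg.mp h.symm

theorem inner_sub_inner_smul_self_eq_zero {u : E} (hu : ‖u‖ = 1) (x : E) :
    ⟪u, x - ⟪u, x⟫_𝕜 • u⟫_𝕜 = 0 := by
  rw [inner_sub_right, inner_smul_right, inner_self_eq_norm_sq_to_K, hu]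
  simp

theorem norm_sq_eq_norm_inner_sq_add_norm_sub_sq {u : E} (hu : ‖u‖ = 1) (x : E) :
    ‖x‖ ^ 2 = ‖⟪u, x⟫_𝕜‖ ^ 2 + ‖x - ⟪u, x⟫_𝕜 • u‖ ^ 2 := by
  have h : ⟪⟪u, x⟫_𝕜 • u, x - ⟪u, x⟫_𝕜 • u⟫_𝕜 = 0 := by
    rw [inner_smul_left, inner_sub_inner_smul_self_eq_zero hu, mul_zero]
  have := norm_add_sq_eq_norm_sq_add_norm_sq_of_inner_eq_zero _ _ h
  rw [add_sub_cancel, norm_smul, hu, mul_one] at this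
  simpa only [sq] using this

theorem norm_apply_apply_le_of_apply_eq_self {ε₁ ε₂ : ℝ} (hε₁ : ε₁ ∈ Set.Icc (0 : ℝ) 1)
    (hε₂ : ε₂ ∈ Set.Icc (0 : ℝ) 1) {F : E →ₗ[𝕜] E} (hF : F.IsSymmetric) {T : E →L[𝕜] E}
    (hT : ‖T‖ ≤ 1) {u x : E} (hu : ‖u‖ = 1) (hFu : F u = u) (hTu : ‖T u‖ ≤ 1 - ε₂)
    (hgap : ‖F (x - ⟪u, x⟫_𝕜 • u)‖ ≤ (1 - ε₁) * ‖x - ⟪u, x⟫_𝕜 • u‖) :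
    ‖T (F x)‖ ≤ (1 - ε₁ * ε₂ ^ 2 / 8) * ‖x‖ := by
  set α := ⟪u, x⟫_𝕜
  set b := x - α • u
  have hFx_eq : F x = α • u + F b := by simp [b, hFu]
  have hinner : ⟪u, F x⟫_𝕜 = α := by rw [← hF, hFu]
  have hFb : ‖F b‖ ≤ ‖b‖ := hgap.trans (mul_le_of_le_one_left (norm_nonneg _) (by linarith [hε₁.1]))
  refine le_of_contraction_bounds hε₁ hε₂ (norm_nonneg x)
    (norm_sq_eq_norm_inner_sq_add_norm_sub_sq (𝕜 := 𝕜) hu x) (Y := ‖F x‖) ?_ ?_ ?_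
  · rw [norm_sq_eq_norm_inner_sq_add_norm_sub_sq (𝕜 := 𝕜) hu (F x), hinner, hFx_eq,
      add_sub_cancel_left, ← mul_pow]
    gcongr
  · simpa using T.le_of_opNorm_le hT (F x)
  · calc ‖T (F x)‖ ≤ ‖α‖ * ‖T u‖ + ‖T (F b)‖ := by
          rw [hFx_eq, map_add, map_smul, ← norm_smul]
          exact norm_add_le _ _
      _ ≤ (1 - ε₂) * ‖α‖ + ‖b‖ := by
          rw [mul_comm]
          gcongr
          simpa using (T.le_of_opNorm_le hT (F b)).trans (by simpa using hFb)

end InnerProductSpace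

theorem evnorm_eq_norm_toLp {d : ℕ} (v : Fin d → ℂ) : evnorm v = ‖toLp 2 v‖ :=
  (EuclideanSpace.norm_eq _).symm

theorem matOpNorm_eq_norm_toEuclideanCLM {d : ℕ} (A : Matrix (Fin d) (Fin d) ℂ) :
    matOpNorm A = ‖toEuclideanCLM (n := Fin d) (𝕜 := ℂ) A‖ := by
  rw [← ContinuousLinearMap.sSup_unitClosedBall_eq_norm, matOpNorm]
  congr 1
  ext r
  simp only [Set.mem_ofPred_eq, Set.mem_image, Metric.mem_closedBall, dist_zero_right]
  constructor
  · rintro ⟨v, hv, rfl⟩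
    exact ⟨toLp 2 v, by rwa [← evnorm_eq_norm_toLp], by simp [evnorm_eq_norm_toLp]⟩
  · rintro ⟨x, hx, rfl⟩
    exact ⟨ofLp x, by rwa [evnorm_eq_norm_toLp], by rw [evnorm_eq_norm_toLp]; rfl⟩

theorem Matrix.IsHermitian.norm_toEuclideanLin_le_of_inner_eq_zero {𝕜 n : Type*} [RCLike 𝕜]
    [Fintype n] [DecidableEq n] {ε : ℝ} (hε : ε ≤ 1) {F : Matrix n n 𝕜} (hF : F.IsHermitian)
    (hspec : ∀ μ : ℝ, (∃ v : n → 𝕜, v ≠ 0 ∧ F.mulVec v = (μ : 𝕜) • v) →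
      μ = -1 ∨ (-1 + ε ≤ μ ∧ μ ≤ 1 - ε) ∨ μ = 1)
    {fp fm : n → 𝕜}
    (hkerp : ∀ v : n → 𝕜, F.mulVec v = v → ∃ c : 𝕜, v = c • fp)
    (hkerm : ∀ v : n → 𝕜, F.mulVec v = -v → ∃ c : 𝕜, v = c • fm)
    {x : EuclideanSpace 𝕜 n} (hxp : ⟪toLp 2 fp, x⟫_𝕜 = 0) (hxm : ⟪toLp 2 fm, x⟫_𝕜 = 0) :
    ‖toEuclideanLin F x‖ ≤ (1 - ε) * ‖x‖ := by
  refine (isSymmetric_toEuclideanLin_iff.mpr hF).norm_apply_le_of_inner_eigenvector_eq_zero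
    (by linarith) fun μ v hv hFv hμ => ?_
  have hFv' : F *ᵥ ofLp v = (μ : 𝕜) • ofLp v := congrArg ofLp hFv
  obtain hμ' | hμ' | hμ' := hspec μ ⟨ofLp v, by simpa using hv, hFv'⟩
  · obtain ⟨c, hc⟩ := hkerm (ofLp v) (by simpa [hμ'] using hFv')
    rw [← toLp_ofLp 2 v, hc, toLp_smul, inner_smul_left, hxm, mul_zero]
  · exact absurd hμ (not_lt.mpr (abs_le.mpr ⟨by linarith, hμ'.2⟩))
  · obtain ⟨c, hc⟩ := hkerp (ofLp v) (by simpa [hμ'] using hFv')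
    rw [← toLp_ofLp 2 v, hc, toLp_smul, inner_smul_left, hxp, mul_zero]

theorem TF_contraction_on_fm_perp_general
    (d : ℕ)
    (ε₁ ε₂ : ℝ)
    (hε₁ : ε₁ ∈ Set.Ioo (0 : ℝ) 1) (hε₂ : ε₂ ∈ Set.Ioo (0 : ℝ) 1)
    (F T : Matrix (Fin d) (Fin d) ℂ)
    (hF : F.IsHermitian)
    (hTnorm : matOpNorm T ≤ 1)
    (hspec : ∀ μ : ℝ, (∃ v : Fin d → ℂ, v ≠ 0 ∧ F.mulVec v = (μ : ℂ) • v) →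
      μ = -1 ∨ (-1 + ε₁ ≤ μ ∧ μ ≤ 1 - ε₁) ∨ μ = 1)
    (fp fm : Fin d → ℂ)
    (hfp : F.mulVec fp = fp) (hfm : F.mulVec fm = -fm)
    (hfpnorm : evnorm fp = 1)
    (hkerp : ∀ v : Fin d → ℂ, F.mulVec v = v → ∃ c : ℂ, v = c • fp)
    (hkerm : ∀ v : Fin d → ℂ, F.mulVec v = -v → ∃ c : ℂ, v = c • fm)
    (hTfp : evnorm (T.mulVec fp) ≤ 1 - ε₂) :
    ∀ a : Fin d → ℂ, star fm ⬝ᵥ a = 0 →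
      evnorm (T.mulVec (F.mulVec a)) ≤ (1 - ε₁ * ε₂ ^ 2 / 8) * evnorm a := by
  intro a ha
  set u := toLp 2 fp
  set x := toLp 2 a
  have hu : ‖u‖ = 1 := by rwa [← evnorm_eq_norm_toLp]
  have hFsym := isSymmetric_toEuclideanLin_iff.mpr hF
  have hFu : toEuclideanLin F u = u := congrArg (toLp 2) hfp
  have hFw : toEuclideanLin F (toLp 2 fm) = -toLp 2 fm := congrArg (toLp 2) hfm
  have hwu := hFsym.inner_eq_zero_of_apply_eq_self_of_apply_eq_neg hFu hFw
  have hwx : ⟪toLp 2 fm, x⟫_ℂ = 0 := by rwa [EuclideanSpace.inner_toLp_toLp, dotProduct_comm]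
  have hgap := hF.norm_toEuclideanLin_le_of_inner_eq_zero hε₁.2.le hspec hkerp hkerm
    (inner_sub_inner_smul_self_eq_zero hu x)
    (by rw [inner_sub_right, inner_smul_right, hwu, hwx, mul_zero, sub_zero])
  rw [evnorm_eq_norm_toLp, evnorm_eq_norm_toLp]
  exact norm_apply_apply_le_of_apply_eq_self (Set.Ioo_subset_Icc_self hε₁)
    (Set.Ioo_subset_Icc_self hε₂) hFsym (T := toEuclideanCLM (n := Fin d) (𝕜 := ℂ) T)
    (by rwa [← matOpNorm_eq_norm_toEuclideanCLM]) hu hFu (by rwa [← evnorm_eq_norm_toLp]) hgap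

/-- The contraction estimate (C.13) in the proof of the TF-Stability Lemma:
`T·F` is a strict contraction on the orthogonal complement of `f₋`. -/
theorem TF_contraction_on_fm_perp
    (d : ℕ) (hd : 1 ≤ d)
    (ε₁ ε₂ : ℝ)
    (hε₁ : ε₁ ∈ Set.Ioo (0 : ℝ) 1) (hε₂ : ε₂ ∈ Set.Ioo (0 : ℝ) 1)
    (F T : Matrix (Fin d) (Fin d) ℂ)
    (hF : F.IsHermitian) (hT : T.IsHermitian)
    (hTnorm : matOpNorm T ≤ 1)
    (hspec : ∀ μ : ℝ, (∃ v : Fin d → ℂ, v ≠ 0 ∧ F.mulVec v = (μ : ℂ) • v) →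
      μ = -1 ∨ (-1 + ε₁ ≤ μ ∧ μ ≤ 1 - ε₁) ∨ μ = 1)
    (fp fm : Fin d → ℂ)
    (hfp : F.mulVec fp = fp) (hfm : F.mulVec fm = -fm)
    (hfpnorm : evnorm fp = 1) (hfmnorm : evnorm fm = 1)
    (hkerp : ∀ v : Fin d → ℂ, F.mulVec v = v → ∃ c : ℂ, v = c • fp)
    (hkerm : ∀ v : Fin d → ℂ, F.mulVec v = -v → ∃ c : ℂ, v = c • fm)
    (hTfp : evnorm (T.mulVec fp) ≤ 1 - ε₂) :
    ∀ a : Fin d → ℂ, star fm ⬝ᵥ a = 0 →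
      evnorm (T.mulVec (F.mulVec a)) ≤ (1 - ε₁ * ε₂ ^ 2 / 8) * evnorm a :=
  TF_contraction_on_fm_perp_general d ε₁ ε₂ hε₁ hε₂ F T hF hTnorm hspec fp fm hfp hfm hfpnorm hkerp
    hkerm hTfp
end

section
/- Let N ≥ 1, let H ∈ Matrix N N ℂ be Hermitian with (real) eigenvalues λ₁, …, λ_N counted with multiplicity, and let η > 0. Then H − i·η·1 is invertible and the number of indices i ∈ {1,…,N} with |λ_i| ≤ η satisfies #{ i : |λ_i| ≤ η } ≤ 2·η·Im( tr( (H − i·η·1)⁻¹ ) ). -/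
/-!
Diagonalising `H` by its eigenvector unitary gives `tr (H - iη)⁻¹ = ∑ᵢ (λᵢ - iη)⁻¹`, whose terms
have imaginary part `η / (λᵢ² + η²) ≥ 0`; this is at least `1 / (2η)` exactly when `|λᵢ| ≤ η`.
-/

open Matrix Unitary

theorem Finset.card_filter_le_sum {ι R : Type*} [Semiring R] [PartialOrder R]
    [IsOrderedRing R] (s : Finset ι) (p : ι → Prop) [DecidablePred p] {f : ι → R}
    (hf : ∀ i ∈ s, 0 ≤ f i) (hp : ∀ i ∈ s, p i → 1 ≤ f i) :
    ((s.filter p).card : R) ≤ ∑ i ∈ s, f i := by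
  rw [natCast_card_filter]
  refine sum_le_sum fun i hi => ?_
  split_ifs with h
  exacts [hp i hi h, hf i hi]

namespace Matrix

variable {n R : Type*} [Fintype n] [DecidableEq n] [CommRing R] [StarRing R]

theorem conjStarAlgAut_inv (u : unitary (Matrix n n R)) (M : Matrix n n R) :
    conjStarAlgAut R _ u M⁻¹ = (conjStarAlgAut R _ u M)⁻¹ := by
  have hu : (u : Matrix n n R)⁻¹ = star (u : Matrix n n R) :=
    inv_eq_left_inv (coe_star_mul_self u)
  have hu' : (star (u : Matrix n n R))⁻¹ = u := inv_eq_left_inv (coe_mul_star_self u)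
  simp only [conjStarAlgAut_apply, Matrix.mul_inv_rev, hu, hu', mul_assoc]

theorem trace_conjStarAlgAut (u : unitary (Matrix n n R)) (M : Matrix n n R) :
    (conjStarAlgAut R _ u M).trace = M.trace := by
  rw [conjStarAlgAut_apply, trace_mul_cycle, coe_star_mul_self, one_mul]

theorem inv_diagonal_of_ne_zero {K : Type*} [Field K] {d : n → K} (hd : ∀ i, d i ≠ 0) :
    (diagonal d)⁻¹ = diagonal d⁻¹ :=
  inv_eq_left_inv <| by
    rw [diagonal_mul_diagonal, ← diagonal_one]
    exact congrArg diagonal (funext fun i => inv_mul_cancel₀ (hd i))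

end Matrix

namespace Matrix.IsHermitian

variable {n 𝕜 : Type*} [Fintype n] [DecidableEq n] [RCLike 𝕜] {A : Matrix n n 𝕜}

theorem sub_smul_one_eq_conjStarAlgAut (hA : A.IsHermitian) (z : 𝕜) :
    A - z • (1 : Matrix n n 𝕜) = conjStarAlgAut 𝕜 _ hA.eigenvectorUnitary
      (diagonal fun i => (hA.eigenvalues i : 𝕜) - z) := by
  have hdiag : (diagonal fun i => (hA.eigenvalues i : 𝕜) - z)
      = diagonal (RCLike.ofReal ∘ hA.eigenvalues) - z • (1 : Matrix n n 𝕜) := by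
    rw [smul_one_eq_diagonal, diagonal_sub]; rfl
  rw [hdiag, map_sub, map_smul, map_one, ← hA.spectral_theorem]

theorem isUnit_sub_smul_one_iff (hA : A.IsHermitian) (z : 𝕜) :
    IsUnit (A - z • (1 : Matrix n n 𝕜)) ↔ ∀ i, (hA.eigenvalues i : 𝕜) ≠ z := by
  simp only [hA.sub_smul_one_eq_conjStarAlgAut, isUnit_map_iff, isUnit_diagonal, Pi.isUnit_iff,
    isUnit_iff_ne_zero, sub_ne_zero]

theorem trace_inv_sub_smul_one (hA : A.IsHermitian) {z : 𝕜}
    (hz : ∀ i, (hA.eigenvalues i : 𝕜) ≠ z) :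
    ((A - z • (1 : Matrix n n 𝕜))⁻¹).trace = ∑ i, ((hA.eigenvalues i : 𝕜) - z)⁻¹ := by
  rw [hA.sub_smul_one_eq_conjStarAlgAut, ← conjStarAlgAut_inv, trace_conjStarAlgAut,
    inv_diagonal_of_ne_zero fun i => sub_ne_zero.mpr (hz i), trace_diagonal]
  rfl

end Matrix.IsHermitian

theorem Complex.im_inv_ofReal_sub_mul_I (x y : ℝ) :
    ((x - y * I : ℂ)⁻¹).im = y / (x ^ 2 + y ^ 2) := by
  simp only [inv_im, normSq_apply, sub_re, sub_im, ofReal_re, ofReal_im, mul_re, mul_im, I_re,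
    I_im]
  ring

theorem one_le_two_mul_mul_div_sq_add_sq {x η : ℝ} (hη : 0 < η) (hx : |x| ≤ η) :
    1 ≤ 2 * η * (η / (x ^ 2 + η ^ 2)) := by
  have hx2 : x ^ 2 ≤ η ^ 2 := sq_le_sq' (abs_le.mp hx).1 (abs_le.mp hx).2
  rw [mul_div_assoc', le_div_iff₀ (by positivity)]
  nlinarith

theorem count_small_eigenvalues_le_resolvent_general
    (N : ℕ)
    (H : Matrix (Fin N) (Fin N) ℂ) (hH : H.IsHermitian)
    (η : ℝ) (hη : 0 < η) :
    IsUnit (H - ((η : ℂ) * Complex.I) • (1 : Matrix (Fin N) (Fin N) ℂ))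
    ∧ ((Finset.univ.filter fun i => |hH.eigenvalues i| ≤ η).card : ℝ)
      ≤ 2 * η *
        (Matrix.trace
          ((H - ((η : ℂ) * Complex.I) • (1 : Matrix (Fin N) (Fin N) ℂ))⁻¹)).im := by
  have hz : ∀ i, (hH.eigenvalues i : ℂ) ≠ η * Complex.I := fun i h =>
    hη.ne (by simpa using congrArg Complex.im h)
  refine ⟨(hH.isUnit_sub_smul_one_iff _).mpr hz, ?_⟩
  rw [hH.trace_inv_sub_smul_one hz, Complex.im_sum, Finset.mul_sum]
  calc ((Finset.univ.filter fun i => |hH.eigenvalues i| ≤ η).card : ℝ)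
      ≤ ∑ i, 2 * η * (η / (hH.eigenvalues i ^ 2 + η ^ 2)) :=
        Finset.card_filter_le_sum _ _ (fun i _ => by positivity)
          fun i _ hi => one_le_two_mul_mul_div_sq_add_sq hη hi
    _ = _ := Finset.sum_congr rfl fun i _ =>
        congrArg (2 * η * ·) (Complex.im_inv_ofReal_sub_mul_I _ _).symm

/-- The deterministic estimate in the proof of Lemma 3.8 of the paper: the number of
eigenvalues of a Hermitian matrix `H` in `[−η, η]` is at most
`2η · Im tr (H − iη·1)⁻¹`. -/
theorem count_small_eigenvalues_le_resolvent
    (N : ℕ) (hN : 1 ≤ N)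
    (H : Matrix (Fin N) (Fin N) ℂ) (hH : H.IsHermitian)
    (η : ℝ) (hη : 0 < η) :
    IsUnit (H - ((η : ℂ) * Complex.I) • (1 : Matrix (Fin N) (Fin N) ℂ))
    ∧ ((Finset.univ.filter fun i => |hH.eigenvalues i| ≤ η).card : ℝ)
      ≤ 2 * η *
        (Matrix.trace
          ((H - ((η : ℂ) * Complex.I) • (1 : Matrix (Fin N) (Fin N) ℂ))⁻¹)).im :=
  count_small_eigenvalues_le_resolvent_general N H hH η hη
end
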